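/- arXiv:2603.12713 — 2 statements merged into one kernel-verified Lean document; each statement's English description precedes it below -/
import Mathlib

section
/- With A(Δp) as above and Δp_crit = −λ̂_R/δ: (i) if Δp < Δp_crit then det A > 0 and tr A < 0, so both eigenvalues of A have negative real part; (ii) if Δp = Δp_crit then det A = 0; (iii) if Δp > Δp_crit then det A < 0, so A has one positive and one negative real eigenvalue. -/
open Matrix

lemma spec2 {K : Type*} [Field K] (a b c e μ : K)
    (h : μ ∈ spectrum K !![a, b; c, e]) :
    μ ^ 2 - (a + e) * μ + (a * e - b * c) = 0 := by
  rw [spectrum.mem_iff] at h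
  have hd : (algebraMap K (Matrix (Fin 2) (Fin 2) K) μ - !![a, b; c, e]).det = 0 := by
    by_contra hne
    exact h ((Matrix.isUnit_iff_isUnit_det _).mpr (isUnit_iff_ne_zero.mpr hne))
  simp [Matrix.det_fin_two, Matrix.algebraMap_matrix_apply] at hd
  linear_combination hd

lemma spec2' {K : Type*} [Field K] (a b c e μ : K)
    (h : μ ^ 2 - (a + e) * μ + (a * e - b * c) = 0) :
    μ ∈ spectrum K !![a, b; c, e] := by
  rw [spectrum.mem_iff]
  intro hu
  rw [Matrix.isUnit_iff_isUnit_det, isUnit_iff_ne_zero] at hu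
  apply hu
  simp [Matrix.det_fin_two, Matrix.algebraMap_matrix_apply]
  linear_combination h

lemma eig_iff_spec (M : Matrix (Fin 2) (Fin 2) ℝ) (μ : ℝ) :
    Module.End.HasEigenvalue (Matrix.toLin' M) μ ↔ μ ∈ spectrum ℝ M := by
  rw [Module.End.hasEigenvalue_iff_mem_spectrum]
  exact (AlgEquiv.spectrum_eq Matrix.toLinAlgEquiv' M ▸ Iff.rfl)

theorem extinction_growth_threshold (lamP lamR δ Δp : ℝ)
    (hlamP : 0 < lamP) (hlamR : 0 < lamR) (hδ : 0 < δ) :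
    (Δp < -(lamR / δ) →
      Matrix.det !![Δp * lamP, lamR; (1 - Δp) * lamP, -(δ + lamR)] > 0 ∧
      Matrix.trace !![Δp * lamP, lamR; (1 - Δp) * lamP, -(δ + lamR)] < 0 ∧
      (∀ μ : ℂ, μ ∈ spectrum ℂ
          ((!![Δp * lamP, lamR; (1 - Δp) * lamP, -(δ + lamR)]).map (algebraMap ℝ ℂ)) →
        μ.re < 0)) ∧
    (Δp = -(lamR / δ) →
      Matrix.det !![Δp * lamP, lamR; (1 - Δp) * lamP, -(δ + lamR)] = 0) ∧
    (Δp > -(lamR / δ) →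
      Matrix.det !![Δp * lamP, lamR; (1 - Δp) * lamP, -(δ + lamR)] < 0 ∧
      (∃ μ₁ μ₂ : ℝ, 0 < μ₁ ∧ μ₂ < 0 ∧
        Module.End.HasEigenvalue
          (Matrix.toLin' !![Δp * lamP, lamR; (1 - Δp) * lamP, -(δ + lamR)]) μ₁ ∧
        Module.End.HasEigenvalue
          (Matrix.toLin' !![Δp * lamP, lamR; (1 - Δp) * lamP, -(δ + lamR)]) μ₂)) := by
  set a := Δp * lamP
  set b := lamR
  set c := (1 - Δp) * lamP
  set e := -(δ + lamR)
  have hdet : Matrix.det !![a, b; c, e] = -lamP * (δ * Δp + lamR) := by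
    simp [Matrix.det_fin_two, a, b, c, e]; ring
  have htr : Matrix.trace !![a, b; c, e] = a + e := by
    simp [Matrix.trace_fin_two]
  refine ⟨?_, ?_, ?_⟩
  · intro hΔ
    have hΔδ : δ * Δp + lamR < 0 := by
      have h1 : Δp * δ < -(lamR / δ) * δ := mul_lt_mul_of_pos_right hΔ hδ
      have h2 : -(lamR / δ) * δ = -lamR := by field_simp
      nlinarith [h1, h2]
    have hD : 0 < Matrix.det !![a, b; c, e] := by
      rw [hdet]; nlinarith
    have hΔ0 : Δp < 0 := by
      have : 0 < lamR / δ := by positivity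
      linarith
    have hT : a + e < 0 := by
      have ha : a < 0 := mul_neg_of_neg_of_pos hΔ0 hlamP
      have he : e < 0 := by
        show -(δ + lamR) < 0
        linarith
      linarith
    refine ⟨hD, by rw [htr]; exact hT, ?_⟩
    intro μ hμ
    have hmap : (!![a, b; c, e]).map (algebraMap ℝ ℂ) =
        !![(a : ℂ), (b : ℂ); (c : ℂ), (e : ℂ)] := by
      ext i j; fin_cases i <;> fin_cases j <;> simp
    rw [hmap] at hμ
    have heq := spec2 (a : ℂ) b c e μ hμ
    have hDd : a * e - b * c = Matrix.det !![a, b; c, e] := by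
      simp [Matrix.det_fin_two]
    have hre : μ.re ^ 2 - μ.im ^ 2 - (a + e) * μ.re + (a * e - b * c) = 0 := by
      have := congrArg Complex.re heq
      simp [pow_two, Complex.mul_re, Complex.mul_im] at this ⊢
      linarith [this]
    have him : μ.im * (2 * μ.re - (a + e)) = 0 := by
      have := congrArg Complex.im heq
      simp [pow_two, Complex.mul_re, Complex.mul_im] at this
      linear_combination this
    have hD' : 0 < a * e - b * c := hDd ▸ hD
    by_contra h0
    push_neg at h0
    rcases mul_eq_zero.mp him with h1 | h1
    · rw [h1] at hre; nlinarith
    · nlinarith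
  · intro hΔ
    rw [hdet, hΔ]
    field_simp
    ring
  · intro hΔ
    have hΔδ : 0 < δ * Δp + lamR := by
      have h1 : -(lamR / δ) * δ < Δp * δ := mul_lt_mul_of_pos_right hΔ hδ
      have h2 : -(lamR / δ) * δ = -lamR := by field_simp
      nlinarith [h1, h2]
    have hD : Matrix.det !![a, b; c, e] < 0 := by rw [hdet]; nlinarith
    set t := a + e with ht
    set d := a * e - b * c with hd
    have hDd : d = Matrix.det !![a, b; c, e] := by simp [Matrix.det_fin_two, hd]
    have hd0 : d < 0 := hDd ▸ hD
    have hdisc : 0 < t ^ 2 - 4 * d := by nlinarith [sq_nonneg t]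
    set s := Real.sqrt (t ^ 2 - 4 * d) with hs
    have hs2 : s ^ 2 = t ^ 2 - 4 * d := Real.sq_sqrt hdisc.le
    have hsnn : 0 ≤ s := Real.sqrt_nonneg _
    have habs : |t| < s := by
      rw [← Real.sqrt_sq_eq_abs, hs]
      exact Real.sqrt_lt_sqrt (sq_nonneg t) (by linarith)
    obtain ⟨h1, h2⟩ := abs_lt.mp habs
    clear_value t d s
    refine ⟨hD, (t + s) / 2, (t - s) / 2, ?_, ?_, ?_, ?_⟩
    · linarith
    · linarith
    · rw [eig_iff_spec]
      apply spec2'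
      rw [← ht, ← hd]
      linear_combination hs2 / 4
    · rw [eig_iff_spec]
      apply spec2'
      rw [← ht, ← hd]
      linear_combination hs2 / 4
end

section
/- Assume δ > 0, p₁, p₂, λ_P are differentiable with λ_P > 0, λ_P' < 0, p₁' − p₂' > 0 (equivalently Δ' = p₂'−p₁' < 0), p₁ < p₂, 1−p₁+p₂ > 0, and λ_R differentiable with λ_R' < 0 and λ_R ≥ 0. Then the divergence ∂_P G₁ + ∂_W G₂ of the vector field G₁(P,W) = (p₁(W)−p₂(W))λ_P(W)P + λ_R(P)W, G₂(P,W) = (1−p₁(W)+p₂(W))λ_P(W)P − (δ+λ_R(P))W is strictly negative at every point (P,W) with P > 0 and W > 0. -/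
theorem negative_divergence (p₁ p₂ lamP lamR : ℝ → ℝ) (δ : ℝ) (hδ : 0 < δ)
    (hp₁ : Differentiable ℝ p₁) (hp₂ : Differentiable ℝ p₂)
    (hlamP : Differentiable ℝ lamP) (hlamR : Differentiable ℝ lamR)
    (hlamPpos : ∀ w ≥ (0:ℝ), 0 < lamP w) (hlamP' : ∀ w ≥ (0:ℝ), deriv lamP w < 0)
    (hΔ' : ∀ w ≥ (0:ℝ), deriv p₂ w - deriv p₁ w < 0)
    (hplt : ∀ w ≥ (0:ℝ), p₁ w < p₂ w)
    (hcomb : ∀ w ≥ (0:ℝ), 0 < 1 - p₁ w + p₂ w)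
    (hlamR' : ∀ p ≥ (0:ℝ), deriv lamR p < 0) (hlamRnn : ∀ p ≥ (0:ℝ), 0 ≤ lamR p) :
    ∀ P > (0:ℝ), ∀ W > (0:ℝ),
      ((p₁ W - p₂ W) * lamP W + deriv lamR P * W)
        + (((deriv p₂ W - deriv p₁ W) * lamP W
              + (1 - p₁ W + p₂ W) * deriv lamP W) * P - (δ + lamR P)) < 0 := by
  intro P hP W hW
  have hW0 := hW.le
  have hP0 := hP.le
  have h1 : (p₁ W - p₂ W) * lamP W < 0 :=
    mul_neg_of_neg_of_pos (by linarith [hplt W hW0]) (hlamPpos W hW0)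
  have h2 : deriv lamR P * W < 0 := mul_neg_of_neg_of_pos (hlamR' P hP0) hW
  have h3 : ((deriv p₂ W - deriv p₁ W) * lamP W
      + (1 - p₁ W + p₂ W) * deriv lamP W) * P < 0 := by
    apply mul_neg_of_neg_of_pos _ hP
    have := mul_neg_of_neg_of_pos (hΔ' W hW0) (hlamPpos W hW0)
    have := mul_neg_of_pos_of_neg (hcomb W hW0) (hlamP' W hW0)
    linarith
  have h4 := hlamRnn P hP0
  linarith
end
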